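/- Let θ : D × D → R be bounded and uniformly continuous, δ ∈ (0,1), and let μ_s^n → μ_s weakly in Pr_1(D×T). Define g_n(x) = ∫ θ(x,x') 1_{[1,1+δ]}(v') μ_s^n(dx',dv') and g(x) analogously with μ_s. If the v-marginal of μ_s is absolutely continuous with respect to Lebesgue measure, then g_n → g uniformly on every compact subset of D. -/

import Mathlib

/-!
Couple `μₙ` and `μ` by a transport plan `π` of small cost. By Markov's inequality `π` gives
small mass to pairs at distance `≥ r`. For a closer pair whose second point lies outside the
`r`-band around the boundary of the arc, both points give the indicator the same value, so the
integrands differ by at most the modulus of continuity of `θ`, whatever `x` is. The band has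
small `μ`-measure for small `r`, since the boundary of the arc consists of two points and
is therefore null for the absolutely continuous `v`-marginal. This bounds `|gₙ(x) - g(x)|`
uniformly on all of `D`.
-/

open MeasureTheory Filter
open scoped ENNReal

instance : Fact ((0:ℝ) < 2) := ⟨by norm_num⟩

noncomputable def wass1 {X : Type*} [MeasurableSpace X] [PseudoEMetricSpace X]
    (μ ν : Measure X) : ℝ≥0∞ :=
  ⨅ π ∈ {π : Measure (X × X) | π.map Prod.fst = μ ∧ π.map Prod.snd = ν},
    ∫⁻ p, edist p.1 p.2 ∂π

/-- The arc `[1, 1+δ]` of the torus `𝕋 = ℝ/2ℤ`. -/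
def torusArc (δ : ℝ) : Set (AddCircle (2:ℝ)) :=
  (fun r : ℝ => (r : AddCircle (2:ℝ))) '' Set.Icc 1 (1 + δ)

open Set Metric Topology
open scoped NNReal

section Band

variable {X : Type*} [PseudoMetricSpace X]

def frontierBand (r : ℝ) (s : Set X) : Set X :=
  thickening r s ∩ thickening r sᶜ

lemma isOpen_frontierBand (r : ℝ) (s : Set X) : IsOpen (frontierBand r s) :=
  isOpen_thickening.inter isOpen_thickening

lemma frontierBand_mono {r r' : ℝ} (h : r ≤ r') (s : Set X) :
    frontierBand r s ⊆ frontierBand r' s :=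
  inter_subset_inter (thickening_mono h s) (thickening_mono h sᶜ)

lemma biInter_frontierBand (s : Set X) : ⋂ r > 0, frontierBand r s = frontier s := by
  simp only [frontierBand, iInter_inter_distrib, ← closure_eq_iInter_thickening,
    frontier_eq_closure_inter_closure]

lemma mem_iff_mem_of_dist_lt_of_notMem_frontierBand {s : Set X} {r : ℝ} {u v : X}
    (huv : dist u v < r) (hv : v ∉ frontierBand r s) : u ∈ s ↔ v ∈ s := by
  have hr : 0 < r := dist_nonneg.trans_lt huv
  have huv' : dist v u < r := by rwa [dist_comm]
  constructor
  · intro hu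
    by_contra hvs
    exact hv ⟨mem_thickening_iff.2 ⟨u, hu, huv'⟩, self_subset_thickening hr _ hvs⟩
  · intro hvs
    by_contra hu
    exact hv ⟨self_subset_thickening hr _ hvs, mem_thickening_iff.2 ⟨u, hu, huv'⟩⟩

lemma tendsto_measure_frontierBand [MeasurableSpace X] [OpensMeasurableSpace X]
    (μ : Measure X) [IsFiniteMeasure μ] (s : Set X) :
    Tendsto (fun r => μ (frontierBand r s)) (𝓝[>] 0) (𝓝 (μ (frontier s))) := by
  rw [← biInter_frontierBand]
  exact tendsto_measure_biInter_gt (fun r _ => (isOpen_frontierBand r s).nullMeasurableSet)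
    (fun _ _ _ h => frontierBand_mono h s) ⟨1, one_pos, measure_ne_top _ _⟩

end Band

lemma IsOpenMap.frontier_image_subset_of_isCompact {X Y : Type*} [TopologicalSpace X]
    [TopologicalSpace Y] [T2Space Y] {f : X → Y} (hf : IsOpenMap f) (hc : Continuous f)
    {s : Set X} (hs : IsCompact s) : frontier (f '' s) ⊆ f '' frontier s := by
  rw [frontier, (hs.image hc).isClosed.closure_eq]
  rintro _ ⟨⟨x, hx, rfl⟩, hint⟩
  exact ⟨x, ⟨subset_closure hx, fun hx' => hint (hf.image_interior_subset s ⟨x, hx', rfl⟩)⟩, rfl⟩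

instance AddCircle.nullSingletonClass_volume {T : ℝ} [Fact (0 < T)] :
    NullSingletonClass (volume : Measure (AddCircle T)) :=
  ⟨fun x => by simpa using AddCircle.volume_closedBall T (x := x) 0⟩

lemma frontier_Icc_subset_pair {a b : ℝ} : frontier (Icc a b) ⊆ {a, b} := by
  rw [frontier, closure_Icc, interior_Icc]
  rintro x ⟨⟨hax, hxb⟩, hx⟩
  grind

lemma volume_frontier_torusArc (δ : ℝ) : volume (frontier (torusArc δ)) = 0 := by
  have hsub : frontier (torusArc δ) ⊆ (↑) '' {(1 : ℝ), 1 + δ} :=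
    (QuotientAddGroup.isOpenMap_coe.frontier_image_subset_of_isCompact continuous_quotient_mk'
      isCompact_Icc).trans (image_mono frontier_Icc_subset_pair)
  exact measure_mono_null hsub ((((finite_singleton _).insert _).image _).measure_zero _)

lemma norm_integral_le_of_norm_le_off {α E : Type*} [MeasurableSpace α] [NormedAddCommGroup E]
    [NormedSpace ℝ E] {π : Measure α} [IsProbabilityMeasure π] {g : α → E} {B : Set α}
    (hB : MeasurableSet B) {C e : ℝ} (he : 0 ≤ e) (hC : ∀ p, ‖g p‖ ≤ C)
    (hgB : ∀ p ∉ B, ‖g p‖ ≤ e) :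
    ‖∫ p, g p ∂π‖ ≤ e + C * π.real B := by
  have hbound : ∀ p, ‖g p‖ ≤ e + B.indicator (fun _ => C) p := by
    intro p
    by_cases hp : p ∈ B
    · simpa [hp] using (hC p).trans (le_add_of_nonneg_left he)
    · simpa [hp] using hgB p hp
  calc ‖∫ p, g p ∂π‖ ≤ ∫ p, ‖g p‖ ∂π := norm_integral_le_integral_norm g
    _ ≤ ∫ p, (e + B.indicator (fun _ => C) p) ∂π :=
      integral_mono_of_nonneg (ae_of_all _ fun _ => norm_nonneg _)
        ((integrable_const e).add ((integrable_const C).indicator hB)) (ae_of_all _ hbound)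
    _ = e + C * π.real B := by
      rw [integral_add (integrable_const e) ((integrable_const C).indicator hB),
        integral_indicator_const C hB]
      simp [mul_comm]

lemma exists_coupling_of_wass1_lt {X : Type*} [MeasurableSpace X] [PseudoEMetricSpace X]
    {μ ν : Measure X} {τ : ℝ≥0∞} (h : wass1 μ ν < τ) :
    ∃ π : Measure (X × X), π.map Prod.fst = μ ∧ π.map Prod.snd = ν ∧
      ∫⁻ p, edist p.1 p.2 ∂π < τ := by
  simpa only [wass1, iInf_lt_iff, mem_ofPred_eq, exists_prop, and_assoc] using h

def UniformlyEquicontinuousOffSmallSets {X E ι : Type*} [PseudoMetricSpace X]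
    [MeasurableSpace X] [NormedAddCommGroup E] (μ : Measure X) (f : ι → X → E) : Prop :=
  ∀ e > 0, ∃ r > 0, ∃ S, MeasurableSet S ∧ μ.real S ≤ e ∧
    ∀ i y z, dist y z < r → z ∉ S → ‖f i y - f i z‖ ≤ e

section Coupling

variable {X E : Type*} [PseudoMetricSpace X] [MeasurableSpace X] [BorelSpace X]
  [SecondCountableTopology X] [NormedAddCommGroup E] [NormedSpace ℝ E]

lemma measureReal_le_edist_le_of_lintegral_edist_lt {π : Measure (X × X)} {r e : ℝ} (hr : 0 < r)
    (he : 0 ≤ e) (hcost : ∫⁻ p, edist p.1 p.2 ∂π < ENNReal.ofReal (r * e)) :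
    π.real {p | ENNReal.ofReal r ≤ edist p.1 p.2} ≤ e := by
  have hr' : ENNReal.ofReal r ≠ 0 := (ENNReal.ofReal_pos.2 hr).ne'
  refine ENNReal.toReal_le_of_le_ofReal he ?_
  calc π {p | ENNReal.ofReal r ≤ edist p.1 p.2}
      ≤ (∫⁻ p, edist p.1 p.2 ∂π) / ENNReal.ofReal r :=
        meas_ge_le_lintegral_div measurable_edist.aemeasurable hr' ENNReal.ofReal_ne_top
    _ ≤ ENNReal.ofReal (r * e) / ENNReal.ofReal r := by gcongr
    _ = ENNReal.ofReal e := by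
      rw [ENNReal.ofReal_mul hr.le, mul_comm, ENNReal.mul_div_cancel_right hr' ENNReal.ofReal_ne_top]

lemma norm_integral_sub_le_of_coupling {μ ν : Measure X} {π : Measure (X × X)}
    [IsProbabilityMeasure π] (hπμ : π.map Prod.fst = μ) (hπν : π.map Prod.snd = ν)
    {f : X → E} (hf : StronglyMeasurable f) {C : ℝ≥0} (hC : ∀ z, ‖f z‖ ≤ C) {e r : ℝ}
    (he : 0 ≤ e) {S : Set X} (hS : MeasurableSet S)
    (hfS : ∀ y z, dist y z < r → z ∉ S → ‖f y - f z‖ ≤ e) :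
    ‖∫ z, f z ∂μ - ∫ z, f z ∂ν‖ ≤
      e + 2 * C * (π.real {p | ENNReal.ofReal r ≤ edist p.1 p.2} + ν.real S) := by
  set far := {p : X × X | ENNReal.ofReal r ≤ edist p.1 p.2}
  have hfar : MeasurableSet far := measurableSet_le measurable_const measurable_edist
  have hint : ∀ φ : X × X → X, Measurable φ → Integrable (fun p => f (φ p)) π := fun φ hφ =>
    .of_bound (hf.comp_measurable hφ).aestronglyMeasurable C (ae_of_all _ fun p => hC (φ p))
  have hgood : ∀ p ∉ far ∪ Prod.snd ⁻¹' S, ‖f p.1 - f p.2‖ ≤ e := by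
    intro p hp
    simp only [mem_union, mem_preimage, not_or] at hp
    exact hfS p.1 p.2 (edist_lt_ofReal.1 (not_le.1 hp.1)) hp.2
  rw [← hπμ, ← hπν, integral_map measurable_fst.aemeasurable hf.aestronglyMeasurable,
    integral_map measurable_snd.aemeasurable hf.aestronglyMeasurable,
    ← integral_sub (hint _ measurable_fst) (hint _ measurable_snd),
    map_measureReal_apply measurable_snd hS]
  calc _ ≤ e + 2 * C * π.real (far ∪ Prod.snd ⁻¹' S) :=
        norm_integral_le_of_norm_le_off (hfar.union (measurable_snd hS)) he
          (fun p => (norm_sub_le _ _).trans (by linarith [hC p.1, hC p.2])) hgood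
    _ ≤ _ := by gcongr; exact measureReal_union_le _ _

theorem tendstoUniformly_integral_of_tendsto_wass1 {ι κ : Type*} {l : Filter κ}
    {μs : κ → Measure X} {μ : Measure X} [IsProbabilityMeasure μ]
    (hconv : Tendsto (fun n => wass1 (μs n) μ) l (𝓝 0)) {f : ι → X → E}
    (hf : ∀ i, StronglyMeasurable (f i)) {C : ℝ≥0} (hC : ∀ i z, ‖f i z‖ ≤ C)
    (hequi : UniformlyEquicontinuousOffSmallSets μ f) :
    TendstoUniformly (fun n i => ∫ z, f i z ∂μs n) (fun i => ∫ z, f i z ∂μ) l := by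
  rw [Metric.tendstoUniformly_iff]
  intro ε hε
  set e := ε / (4 * C + 2)
  have he : 0 < e := by positivity
  have hεe : e * (4 * C + 2) = ε := div_mul_cancel₀ ε (by positivity)
  obtain ⟨r, hr, S, hS, hμS, hfS⟩ := hequi e he
  filter_upwards [hconv.eventually_lt_const (ENNReal.ofReal_pos.2 (mul_pos hr he))] with n hn i
  obtain ⟨π, hπμs, hπμ, hcost⟩ := exists_coupling_of_wass1_lt hn
  have : IsProbabilityMeasure (π.map Prod.snd) := hπμ ▸ inferInstance
  have := Measure.isProbabilityMeasure_of_map (μ := π) Prod.snd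
  rw [dist_comm, dist_eq_norm]
  calc _ ≤ e + 2 * C * (π.real {p | ENNReal.ofReal r ≤ edist p.1 p.2} + μ.real S) :=
        norm_integral_sub_le_of_coupling hπμs hπμ (hf i) (hC i) he.le hS (hfS i)
    _ ≤ e + 2 * C * (e + e) := by
        gcongr
        exact measureReal_le_edist_le_of_lintegral_edist_lt hr he.le hcost
    _ < ε := by nlinarith

end Coupling

lemma uniformlyEquicontinuousOffSmallSets_mul_indicator {Y Z V : Type*} [PseudoMetricSpace Y]
    [PseudoMetricSpace Z] [PseudoMetricSpace V] [MeasurableSpace Z] [MeasurableSpace V]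
    [OpensMeasurableSpace V] {θ : Y × Z → ℝ} (hθ : UniformContinuous θ) {A : Set V}
    {μ : Measure (Z × V)} [IsFiniteMeasure μ] (hA : μ.map Prod.snd (frontier A) = 0) :
    UniformlyEquicontinuousOffSmallSets μ
      (fun y z => θ (y, z.1) * A.indicator (fun _ => (1 : ℝ)) z.2) := by
  intro e he
  obtain ⟨η, hη, hθη⟩ := Metric.uniformContinuous_iff.1 hθ e he
  have hband := tendsto_measure_frontierBand (μ.map Prod.snd) A
  rw [hA] at hband
  have hsmall : ∀ᶠ r in 𝓝[>] (0 : ℝ), r ∈ Ioo 0 η := Ioo_mem_nhdsGT hη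
  obtain ⟨r, ⟨hr, hrη⟩, hμr⟩ :=
    (hsmall.and (hband.eventually_lt_const (ENNReal.ofReal_pos.2 he))).exists
  refine ⟨r, hr, Prod.snd ⁻¹' frontierBand r A,
    measurable_snd (isOpen_frontierBand r A).measurableSet, ?_, ?_⟩
  · rw [← map_measureReal_apply measurable_snd (isOpen_frontierBand r A).measurableSet]
    exact ENNReal.toReal_le_of_le_ofReal he.le hμr.le
  · intro y p q hpq hq
    rw [Prod.dist_eq, max_lt_iff] at hpq
    have hmem : p.2 ∈ A ↔ q.2 ∈ A := mem_iff_mem_of_dist_lt_of_notMem_frontierBand hpq.2 hq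
    have hθpq : dist (θ (y, p.1)) (θ (y, q.1)) < e :=
      hθη (by rw [dist_prod_same_left]; exact hpq.1.trans hrη)
    by_cases hqA : q.2 ∈ A
    · simpa [hqA, hmem.2 hqA, Real.dist_eq] using hθpq.le
    · simpa [hqA, mt hmem.1 hqA] using he.le

theorem gn_tendstoUniformlyOn_compacts_general
    (D : Set (EuclideanSpace ℝ (Fin 3)))
    (θ : ↥D × ↥D → ℝ) (hθu : UniformContinuous θ) (Cθ : ℝ) (hθb : ∀ p, |θ p| ≤ Cθ)
    (δ : ℝ)
    (μn : ℕ → Measure (↥D × AddCircle (2:ℝ))) (μ : Measure (↥D × AddCircle (2:ℝ)))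
    [IsProbabilityMeasure μ]
    (hconv : Tendsto (fun n => wass1 (μn n) μ) atTop (nhds 0))
    (hac : μ.map Prod.snd ≪ (volume : Measure (AddCircle (2:ℝ)))) :
    ∀ K : Set ↥D, IsCompact K →
      TendstoUniformlyOn
        (fun n x => ∫ z, θ (x, z.1) * (torusArc δ).indicator (fun _ => (1:ℝ)) z.2 ∂(μn n))
        (fun x => ∫ z, θ (x, z.1) * (torusArc δ).indicator (fun _ => (1:ℝ)) z.2 ∂μ)
        atTop K := by
  intro K _
  have hA : MeasurableSet (torusArc δ) :=
    (isCompact_Icc.image (AddCircle.continuous_mk' 2)).isClosed.measurableSet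
  refine (tendstoUniformly_integral_of_tendsto_wass1 hconv (C := Cθ.toNNReal) (fun x => ?_)
    (fun x z => ?_) (uniformlyEquicontinuousOffSmallSets_mul_indicator hθu
      (hac (volume_frontier_torusArc δ)))).tendstoUniformlyOn
  · exact ((hθu.continuous.measurable.comp (measurable_const.prodMk measurable_fst)).mul
      ((measurable_const.indicator hA).comp measurable_snd)).stronglyMeasurable
  · calc ‖θ (x, z.1) * (torusArc δ).indicator (fun _ => (1 : ℝ)) z.2‖ ≤ |θ (x, z.1)| := by
          rw [Real.norm_eq_abs, abs_mul]
          exact mul_le_of_le_one_right (abs_nonneg _)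
            (by by_cases h : z.2 ∈ torusArc δ <;> simp [h])
      _ ≤ Cθ.toNNReal := (hθb _).trans (Real.le_coe_toNNReal Cθ)

/-- If `θ : D × D → ℝ` is bounded and uniformly continuous, `δ ∈ (0,1)`, `μⁿ → μ` in
`Pr₁(D × 𝕋)`, and the `v`-marginal of `μ` is absolutely continuous, then
`gₙ(x) = ∫ θ(x,x') 1_{[1,1+δ]}(v') μⁿ(dx',dv')` converges to the analogous `g` uniformly on
every compact subset of `D`. -/
theorem gn_tendstoUniformlyOn_compacts
    (D : Set (EuclideanSpace ℝ (Fin 3))) (hD : IsOpen D) (hDconn : IsConnected D)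
    (θ : ↥D × ↥D → ℝ) (hθu : UniformContinuous θ) (Cθ : ℝ) (hθb : ∀ p, |θ p| ≤ Cθ)
    (δ : ℝ) (hδ : δ ∈ Set.Ioo (0:ℝ) 1)
    (μn : ℕ → Measure (↥D × AddCircle (2:ℝ))) (μ : Measure (↥D × AddCircle (2:ℝ)))
    [∀ n, IsProbabilityMeasure (μn n)] [IsProbabilityMeasure μ]
    (hmom : ∀ n, ∃ z0, ∫⁻ z, edist z0 z ∂(μn n) < ⊤)
    (hmomμ : ∃ z0, ∫⁻ z, edist z0 z ∂μ < ⊤)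
    (hconv : Tendsto (fun n => wass1 (μn n) μ) atTop (nhds 0))
    (hac : μ.map Prod.snd ≪ (volume : Measure (AddCircle (2:ℝ)))) :
    ∀ K : Set ↥D, IsCompact K →
      TendstoUniformlyOn
        (fun n x => ∫ z, θ (x, z.1) * (torusArc δ).indicator (fun _ => (1:ℝ)) z.2 ∂(μn n))
        (fun x => ∫ z, θ (x, z.1) * (torusArc δ).indicator (fun _ => (1:ℝ)) z.2 ∂μ)
        atTop K :=
  gn_tendstoUniformlyOn_compacts_general D θ hθu Cθ hθb δ μn μ hconv hac
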